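/- For an invertible measure-preserving map T, a finite partition α, and all nonnegative integers m and n, the telescoping identity Σ_{k=-m}^{n-1} I(α | ∨_{j=1}^{n-k} T^{-j}α) ∘ T^k = I(∨_{j=-n}^{m} T^j α) − I(T^{-n}α) holds pointwise μ-almost everywhere. -/
import Mathlib


open MeasureTheory Filter Finset

variable {X : Type*}

/-- Information of the partition with labeling map `p` at `x`: `-log μ(atom of x)`. -/
noncomputable def infoFn [MeasurableSpace X] (μ : Measure X) {ι : Type*} (p : X → ι) (x : X) : ℝ :=
  - Real.log (μ (p ⁻¹' {p x})).toReal

/-- Conditional information `I(p | q)(x) = -log (μ(A∩B)/μ(B))`. -/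
noncomputable def cinfoFn [MeasurableSpace X] (μ : Measure X) {ι κ : Type*} (p : X → ι) (q : X → κ)
    (x : X) : ℝ :=
  - Real.log ((μ (p ⁻¹' {p x} ∩ q ⁻¹' {q x})).toReal / (μ (q ⁻¹' {q x})).toReal)

/-- `p` is a finite measurable partition (as a labeling map) with atoms of positive measure. -/
def IsFinPartition [MeasurableSpace X] (μ : Measure X) {ι : Type*} [Fintype ι] (p : X → ι) : Prop :=
  (∀ i, MeasurableSet (p ⁻¹' {i})) ∧ (∀ i, 0 < μ (p ⁻¹' {i}))

/-- Labeling map of the join `∨_{j=-n}^{m} T^j α` (atom of `T^j α` at `x` is labeled `α (T^{-j} x)`). -/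
def joinZ (T : Equiv.Perm X) {ι : Type*} (α : X → ι) (n m : ℕ) :
    X → (Finset.Icc (-(n:ℤ)) (m:ℤ) → ι) :=
  fun y j => α ((T ^ (-(j : ℤ))) y)

/-- Labeling map of `∨_{j=1}^{s} T^{-j} α`. -/
def pastJoin (T : Equiv.Perm X) {ι : Type*} (α : X → ι) (s : ℤ) :
    X → (Finset.Icc (1:ℤ) s → ι) :=
  fun y j => α ((T ^ (j : ℤ)) y)

/-- Labeling map of `∨_{j=1}^{s} T^{j} α`. -/
def futureJoin (T : Equiv.Perm X) {ι : Type*} (α : X → ι) (s : ℤ) :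
    X → (Finset.Icc (1:ℤ) s → ι) :=
  fun y j => α ((T ^ (-(j : ℤ))) y)

/-- Labeling map of `∨_{k=0}^{n} F^{-k} α` for a (not necessarily invertible) map `F`. -/
def pastJoinIter (F : X → X) {ι : Type*} (α : X → ι) (n : ℕ) :
    X → (Finset.range (n+1) → ι) :=
  fun y k => α (F^[(k : ℕ)] y)

/-- Labeling map of `∨_{k=1}^{s} F^{-k} α` for a (not necessarily invertible) map `F`. -/
def pastJoinIter₁ (F : X → X) {ι : Type*} (α : X → ι) (s : ℕ) :
    X → (Finset.range s → ι) :=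
  fun y k => α (F^[(k : ℕ) + 1] y)

/-- Integer powers of a measure-preserving invertible map are measure preserving. -/
lemma mp_zpow [MeasurableSpace X] {μ : Measure X} (T : Equiv.Perm X)
    (hT : MeasurePreserving T μ μ) (hT' : MeasurePreserving T.symm μ μ) (k : ℤ) :
    MeasurePreserving (T ^ k : Equiv.Perm X) μ μ := by
  have hpow : ∀ (P : Equiv.Perm X), MeasurePreserving P μ μ → ∀ j : ℕ,
      MeasurePreserving (P ^ j : Equiv.Perm X) μ μ := by
    intro P hP j
    induction j with
    | zero => simpa using MeasurePreserving.id μ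
    | succ i ih =>
      rw [pow_succ P i]
      simpa [Equiv.Perm.coe_mul] using ih.comp hP
  cases k with
  | ofNat j => simpa using hpow T hT j
  | negSucc j =>
    rw [zpow_negSucc, ← inv_pow]
    exact hpow _ ((show (T⁻¹ : Equiv.Perm X) = T.symm from rfl) ▸ hT') (j+1)

lemma zpow_apply_add (T : Equiv.Perm X) (i j : ℤ) (w : X) :
    (T ^ (i + j)) w = (T ^ i) ((T ^ j) w) := by
  rw [zpow_add]; rfl

/-- Almost every point lies in an atom of positive measure. -/
lemma null_fiber [MeasurableSpace X] (μ : Measure X) {κ : Type*} [Fintype κ] (p : X → κ) :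
    ∀ᵐ x ∂μ, μ (p ⁻¹' {p x}) ≠ 0 := by
  have hnull : μ (⋃ c ∈ {c : κ | μ (p ⁻¹' {c}) = 0}, p ⁻¹' {c}) = 0 := by
    refine (measure_biUnion_null_iff (Set.to_countable _)).2 ?_
    intro c hc; exact hc
  refine measure_mono_null ?_ hnull
  intro x hx
  exact Set.mem_biUnion (not_not.1 hx) rfl

/-- Telescoping sums over integer intervals. -/
lemma tel_sum (f : ℤ → ℝ) (a : ℤ) : ∀ b : ℤ, a ≤ b →
    ∑ k ∈ Finset.Icc a (b - 1), (f (k+1) - f k) = f b - f a := by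
  refine Int.le_induction ?_ ?_
  · simp
  · intro b hb ih
    have h1 : Finset.Icc a (b + 1 - 1) = Finset.Icc a b := by norm_num
    have h3 : Finset.Icc a b = insert b (Finset.Icc a (b-1)) := by
      ext k; simp only [Finset.mem_Icc, Finset.mem_insert]; omega
    rw [h1, h3, Finset.sum_insert (by simp [Finset.mem_Icc]), ih]
    ring

/-- telescoping identity:
`∑_{k=-m}^{n-1} I(α | ∨_{j=1}^{n-k} T^{-j}α) ∘ T^k = I(∨_{j=-n}^{m} T^j α) − I(T^{-n}α)`
holds `μ`-a.e., for all nonnegative integers `m`, `n`. -/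
theorem telescoping_information_identity
    [MeasurableSpace X] (μ : Measure X) [IsProbabilityMeasure μ]
    (T : Equiv.Perm X)
    (hT : MeasurePreserving T μ μ) (hT' : MeasurePreserving T.symm μ μ)
    {ι : Type*} [Fintype ι] (α : X → ι) (hα : IsFinPartition μ α)
    (m n : ℕ) :
    ∀ᵐ x ∂μ,
      (∑ k ∈ Finset.Icc (-(m:ℤ)) ((n:ℤ) - 1),
          cinfoFn μ α (pastJoin T α ((n:ℤ) - k)) ((T ^ k) x))
        = infoFn μ (joinZ T α n m) x - infoFn μ (fun y => α ((T ^ (n:ℤ)) y)) x := by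
  classical
  set q : (a : ℤ) → X → ((Finset.Icc a (n:ℤ) : Finset ℤ) → ι) :=
    fun a x i => α ((T ^ (i : ℤ)) x) with hq
  have hmem : ∀ (a : ℤ) (x w : X), q a w = q a x ↔
      ∀ i ∈ Finset.Icc a (n:ℤ), α ((T ^ i) w) = α ((T ^ i) x) := by
    intro a x w
    simp only [funext_iff, hq]
    constructor
    · intro h i hi; exact h ⟨i, hi⟩
    · intro h i; exact h (i : ℤ) i.2
  have hqmeas : ∀ (a : ℤ) (x : X), MeasurableSet ((q a) ⁻¹' {q a x}) := by
    intro a x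
    have heq : (q a) ⁻¹' {q a x}
        = ⋂ i ∈ Finset.Icc a (n:ℤ), (fun w => (T ^ i) w) ⁻¹' (α ⁻¹' {α ((T ^ i) x)}) := by
      ext w
      simp only [Set.mem_iInter, Set.mem_preimage, Set.mem_singleton_iff]
      exact hmem a x w
    rw [heq]
    exact MeasurableSet.biInter (Set.to_countable _)
      (fun i _ => (mp_zpow T hT hT' i).measurable (hα.1 _))
  have hSk : ∀ (a k : ℤ) (x w : X), (q a ((T ^ (-k)) w) = q a x) ↔
      ∀ i ∈ Finset.Icc a (n:ℤ), α ((T ^ (i - k)) w) = α ((T ^ i) x) := by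
    intro a k x w
    rw [hmem]
    refine forall₂_congr fun i _ => ?_
    rw [show (i : ℤ) - k = i + (-k) by ring, zpow_apply_add]
  have hpast : ∀ (k : ℤ) (x w : X),
      (pastJoin T α ((n:ℤ) - k) w = pastJoin T α ((n:ℤ) - k) ((T ^ k) x)) ↔
      ∀ i ∈ Finset.Icc (k+1) (n:ℤ), α ((T ^ (i - k)) w) = α ((T ^ i) x) := by
    intro k x w
    simp only [funext_iff, pastJoin]
    constructor
    · intro h i hi
      simp only [Finset.mem_Icc] at hi
      have h2 := h ⟨i - k, by simp only [Finset.mem_Icc]; omega⟩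
      simpa [← zpow_apply_add, sub_add_cancel] using h2
    · intro h j
      have hj := j.2
      simp only [Finset.mem_Icc] at hj
      have h2 := h ((j : ℤ) + k) (by simp only [Finset.mem_Icc]; omega)
      simpa [add_sub_cancel_right, zpow_apply_add] using h2
  have hM2 : ∀ (k : ℤ), ∀ x : X,
      μ ((pastJoin T α ((n:ℤ) - k)) ⁻¹' {pastJoin T α ((n:ℤ) - k) ((T ^ k) x)})
        = μ ((q (k+1)) ⁻¹' {q (k+1) x}) := by
    intro k x
    have hset : (pastJoin T α ((n:ℤ) - k)) ⁻¹' {pastJoin T α ((n:ℤ) - k) ((T ^ k) x)}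
        = (fun w => (T ^ (-k)) w) ⁻¹' ((q (k+1)) ⁻¹' {q (k+1) x}) := by
      ext w
      simp only [Set.mem_preimage, Set.mem_singleton_iff]
      rw [hpast, hSk]
    rw [hset]
    exact (mp_zpow T hT hT' (-k)).measure_preimage (hqmeas (k+1) x).nullMeasurableSet
  have hM1 : ∀ (k : ℤ), k ≤ (n:ℤ) → ∀ x : X,
      μ (α ⁻¹' {α ((T ^ k) x)} ∩
          (pastJoin T α ((n:ℤ) - k)) ⁻¹' {pastJoin T α ((n:ℤ) - k) ((T ^ k) x)})
        = μ ((q k) ⁻¹' {q k x}) := by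
    intro k hk x
    have hset : α ⁻¹' {α ((T ^ k) x)} ∩
          (pastJoin T α ((n:ℤ) - k)) ⁻¹' {pastJoin T α ((n:ℤ) - k) ((T ^ k) x)}
        = (fun w => (T ^ (-k)) w) ⁻¹' ((q k) ⁻¹' {q k x}) := by
      ext w
      simp only [Set.mem_inter_iff, Set.mem_preimage, Set.mem_singleton_iff]
      rw [hpast, hSk]
      constructor
      · rintro ⟨h0, h1⟩ i hi
        simp only [Finset.mem_Icc] at hi
        rcases eq_or_lt_of_le hi.1 with h | h
        · subst h
          simpa using h0
        · exact h1 i (by simp only [Finset.mem_Icc]; omega)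
      · intro h
        refine ⟨?_, fun i hi => h i (by simp only [Finset.mem_Icc] at hi ⊢; omega)⟩
        have h2 := h k (by simp only [Finset.mem_Icc]; omega)
        simpa using h2
    rw [hset]
    exact (mp_zpow T hT hT' (-k)).measure_preimage (hqmeas k x).nullMeasurableSet
  -- identification of the right-hand side sets
  have hR1 : ∀ x : X, (joinZ T α n m) ⁻¹' {joinZ T α n m x}
      = (q (-(m:ℤ))) ⁻¹' {q (-(m:ℤ)) x} := by
    intro x
    ext w
    simp only [Set.mem_preimage, Set.mem_singleton_iff]
    rw [hmem]
    simp only [funext_iff, joinZ]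
    constructor
    · intro h i hi
      simp only [Finset.mem_Icc] at hi
      have h2 := h ⟨-i, by simp only [Finset.mem_Icc]; omega⟩
      simpa using h2
    · intro h j
      have hj := j.2
      simp only [Finset.mem_Icc] at hj
      exact h (-(j : ℤ)) (by simp only [Finset.mem_Icc]; omega)
  have hR2 : ∀ x : X, (fun y => α ((T ^ (n:ℤ)) y)) ⁻¹' {α ((T ^ (n:ℤ)) x)}
      = (q (n:ℤ)) ⁻¹' {q (n:ℤ) x} := by
    intro x
    ext w
    simp only [Set.mem_preimage, Set.mem_singleton_iff]
    rw [hmem]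
    constructor
    · intro h i hi
      simp only [Finset.mem_Icc] at hi
      have : i = (n:ℤ) := by omega
      subst this
      exact h
    · intro h
      exact h (n:ℤ) (by simp [Finset.mem_Icc])
  have hgood : ∀ᵐ x ∂μ, ∀ a : ℤ, μ ((q a) ⁻¹' {q a x}) ≠ 0 :=
    ae_all_iff.2 fun a => null_fiber μ (q a)
  filter_upwards [hgood] with x hx
  have hJpos : ∀ a : ℤ, 0 < (μ ((q a) ⁻¹' {q a x})).toReal :=
    fun a => ENNReal.toReal_pos (hx a) (measure_ne_top μ _)
  have hsum : (∑ k ∈ Finset.Icc (-(m:ℤ)) ((n:ℤ) - 1),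
      cinfoFn μ α (pastJoin T α ((n:ℤ) - k)) ((T ^ k) x))
      = ∑ k ∈ Finset.Icc (-(m:ℤ)) ((n:ℤ) - 1),
        (Real.log (μ ((q (k+1)) ⁻¹' {q (k+1) x})).toReal
          - Real.log (μ ((q k) ⁻¹' {q k x})).toReal) := by
    refine Finset.sum_congr rfl fun k hk => ?_
    simp only [Finset.mem_Icc] at hk
    rw [cinfoFn, hM1 k (by omega) x, hM2 k x,
      Real.log_div (hJpos k).ne' (hJpos (k+1)).ne']
    ring
  rw [hsum, tel_sum (fun a => Real.log (μ ((q a) ⁻¹' {q a x})).toReal) (-(m:ℤ)) (n:ℤ)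
    (by omega)]
  simp only [infoFn]
  rw [hR1 x, hR2 x]
  ring
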